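/- Fix real parameters γ, α with γ > 1 and α > 0, real constants ã₁₂, ã₁₄, b̃₁₃, b̃₁₄, and reals n_x, n_y. For Φ = (φ₁,φ₂,φ₃,φ₄) ∈ ℝ⁴ with φ₁ ≠ 0, set u = φ₂/φ₁, v = φ₃/φ₁, u_n = n_x u + n_y v, and define Ã(Φ) = [[α²u, ã₁₂φ₂, 0, ã₁₄φ₄],[−2ã₁₂φ₂, ã₁₂φ₁ + ((γ−1)/2)u, 0, 0],[0, 0, ((γ−1)/2)u, 0],[−2ã₁₄φ₄, 2(γ−1)φ₄/φ₁, 0, ã₁₄φ₁ + (2−γ)u]] and B̃(Φ) = [[α²v, 0, b̃₁₃φ₃, b̃₁₄φ₄],[0, ((γ−1)/2)v, 0, 0],[−2b̃₁₃φ₃, 0, b̃₁₃φ₁ + ((γ−1)/2)v, 0],[−2b̃₁₄φ₄, 0, 2(γ−1)φ₄/φ₁, b̃₁₄φ₁ + (2−γ)v]]. Then Φᵀ ( n_x Ã(Φ) + n_y B̃(Φ) ) Φ = u_n · ( α² φ₁² + ((γ−1)/2)(φ₂² + φ₃²) + γ φ₄² ). -/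
import Mathlib


open Matrix

/-- The derived matrix `Ã(Φ)` (with free parameters `ã₁₂, ã₁₄`). -/
noncomputable def matAtil (γ α a12 a14 : ℝ) (φ : Fin 4 → ℝ) : Matrix (Fin 4) (Fin 4) ℝ :=
  let u := φ 1 / φ 0
  let q := φ 3 / φ 0
  !![α ^ 2 * u, a12 * φ 1, 0, a14 * φ 3;
     -(2 * a12 * φ 1), a12 * φ 0 + (γ - 1) / 2 * u, 0, 0;
     0, 0, (γ - 1) / 2 * u, 0;
     -(2 * a14 * φ 3), 2 * (γ - 1) * q, 0, a14 * φ 0 + (2 - γ) * u]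

/-- The derived matrix `B̃(Φ)` (with free parameters `b̃₁₃, b̃₁₄`). -/
noncomputable def matBtil (γ α b13 b14 : ℝ) (φ : Fin 4 → ℝ) : Matrix (Fin 4) (Fin 4) ℝ :=
  let v := φ 2 / φ 0
  let q := φ 3 / φ 0
  !![α ^ 2 * v, 0, b13 * φ 2, b14 * φ 3;
     0, (γ - 1) / 2 * v, 0, 0;
     -(2 * b13 * φ 2), 0, b13 * φ 0 + (γ - 1) / 2 * v, 0;
     -(2 * b14 * φ 3), 0, 2 * (γ - 1) * q, b14 * φ 0 + (2 - γ) * v]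

/-- **The boundary contraction of the skew-symmetric Euler form:**
`Φᵀ (n_x Ã + n_y B̃) Φ = u_n (α² φ₁² + ((γ−1)/2)(φ₂² + φ₃²) + γ φ₄²)`,
independently of the free parameters. -/
theorem stmt_8 (γ α a12 a14 b13 b14 nx ny : ℝ) (hγ : 1 < γ) (hα : 0 < α)
    (Φ : Fin 4 → ℝ) (hφ1 : Φ 0 ≠ 0) :
    Φ ⬝ᵥ (nx • matAtil γ α a12 a14 Φ + ny • matBtil γ α b13 b14 Φ).mulVec Φ
      = (nx * (Φ 1 / Φ 0) + ny * (Φ 2 / Φ 0))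
        * (α ^ 2 * Φ 0 ^ 2 + (γ - 1) / 2 * (Φ 1 ^ 2 + Φ 2 ^ 2) + γ * Φ 3 ^ 2) := by
  simp only [matAtil, matBtil, dotProduct, mulVec, Matrix.add_apply, Matrix.smul_apply,
    Fin.sum_univ_four, Matrix.cons_val', Matrix.cons_val_zero, Matrix.cons_val_one,
    Matrix.head_cons, Matrix.empty_val', Matrix.cons_val_fin_one, Matrix.head_fin_const,
    smul_eq_mul, Matrix.of_apply, Matrix.cons_val_two, Matrix.tail_cons, Matrix.cons_val_three]
  field_simp
  ring
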